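/- Let w : Fin n → Bool be a finite word and k, l natural numbers. There exists an infinite sequence x : ℕ → Bool extending w (i.e., x m = w m for all m < n) on which the window counting constraint CC_max(k,l) holds, if and only if CC_max(k,l) holds on the particular extension of w that is constantly false from position n onward. -/

import Mathlib

/-- The window counting constraint CC_max(k,l): every window of `l`
consecutive moves contains at most `k` moves satisfying the formula. -/
def CCmax (k l : ℕ) (x : ℕ → Bool) : Prop :=
  ∀ i : ℕ, ((Finset.Ico i (i + l)).filter (fun m => x m = true)).card ≤ k

theorem CCmax.anti {k l : ℕ} {x y : ℕ → Bool} (hxy : x ≤ y) (hy : CCmax k l y) :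
    CCmax k l x := fun i =>
  (Finset.card_le_card <| Finset.monotone_filter_right _ fun m _ hm =>
    Bool.eq_true_of_true_le (hm ▸ hxy m)).trans (hy i)

theorem dite_lt_else_false_le {n : ℕ} {w : Fin n → Bool} {x : ℕ → Bool}
    (hx : ∀ m : ℕ, (h : m < n) → x m = w ⟨m, h⟩) :
    (fun m => if h : m < n then w ⟨m, h⟩ else false) ≤ x := by
  intro m
  by_cases h : m < n
  · simp [h, hx m h]
  · simp [h]

theorem ccmax_prefix_extension_iff_all_false (n : ℕ) (w : Fin n → Bool)
    (k l : ℕ) :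
    (∃ x : ℕ → Bool, (∀ m : ℕ, (h : m < n) → x m = w ⟨m, h⟩) ∧ CCmax k l x) ↔
      CCmax k l (fun m => if h : m < n then w ⟨m, h⟩ else false) :=
  ⟨fun ⟨_, hx, hcc⟩ => hcc.anti (dite_lt_else_false_le hx),
    fun h => ⟨_, fun _ hm => dif_pos hm, h⟩⟩
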